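/- arXiv:1203.0108 — 4 statements merged into one kernel-verified Lean document; each statement's English description precedes it below -/
import Mathlib

section
/- Let A₀ ∈ ℝ^{m₁×m₂} and let P_{A₀} and P_{A₀}^⊥ be defined by P_{A₀}^⊥(B) = P_{S₁⊥} B P_{S₂⊥} and P_{A₀}(B) = B − P_{A₀}^⊥(B), where S₁, S₂ are the column and row spaces of A₀ (spans of left and right singular vectors) and P_{S⊥} denotes orthogonal projection onto the orthogonal complement. Then for every matrix B, rank(P_{A₀}(B)) ≤ 2·rank(A₀). -/
open Matrix
noncomputable def nuclearNorm {m₁ m₂ : ℕ} (A : Matrix (Fin m₁) (Fin m₂) ℝ) : ℝ :=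
  ∑ i, Real.sqrt ((Matrix.isHermitian_conjTranspose_mul_self A).eigenvalues i)

noncomputable def opNorm {m₁ m₂ : ℕ} (A : Matrix (Fin m₁) (Fin m₂) ℝ) : ℝ :=
  ‖LinearMap.toContinuousLinearMap (Matrix.toEuclideanLin A)‖

noncomputable def frobNorm {m₁ m₂ : ℕ} (A : Matrix (Fin m₁) (Fin m₂) ℝ) : ℝ :=
  Real.sqrt (∑ j, ∑ k, (A j k) ^ 2)

noncomputable def mip {m₁ m₂ : ℕ} (A B : Matrix (Fin m₁) (Fin m₂) ℝ) : ℝ :=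
  (Aᵀ * B).trace

/-! Writing `Q₁ = 1 - P₁` and `Q₂ = 1 - P₂`, one has `B - P₁ B P₂ = Q₁ B + P₁ B Q₂`, a sum of a
matrix factoring through `Q₁` and one factoring through `Q₂`. Hence its rank is at most
`rank Q₁ + rank Q₂`, and both ranks equal `rank A₀` because `Q₁` and `Q₂` have the column spaces
of `A₀` and `A₀ᵀ`. -/

namespace Matrix

variable {K m n : Type*} [Field K] [Fintype n]

theorem rank_add_le (A B : Matrix m n K) : (A + B).rank ≤ A.rank + B.rank := by
  have hrange : LinearMap.range (A + B).mulVecLin ≤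
      LinearMap.range A.mulVecLin ⊔ LinearMap.range B.mulVecLin := by
    rw [Matrix.mulVecLin_add]
    exact LinearMap.range_add_le _ _
  exact (Submodule.finrank_mono hrange).trans (Submodule.finrank_add_le_finrank_add_finrank _ _)

theorem sub_mul_mul_eq [Fintype m] [DecidableEq m] [DecidableEq n]
    (B : Matrix m n K) (P₁ : Matrix m m K) (P₂ : Matrix n n K) :
    B - P₁ * B * P₂ = (1 - P₁) * B + P₁ * (B * (1 - P₂)) := by
  simp only [Matrix.sub_mul, Matrix.mul_sub, Matrix.one_mul, Matrix.mul_one, Matrix.mul_assoc]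
  abel

theorem rank_sub_mul_mul_le [Fintype m] [DecidableEq m] [DecidableEq n]
    (B : Matrix m n K) (P₁ : Matrix m m K) (P₂ : Matrix n n K) :
    (B - P₁ * B * P₂).rank ≤ (1 - P₁).rank + (1 - P₂).rank :=
  calc (B - P₁ * B * P₂).rank
      ≤ ((1 - P₁) * B).rank + (P₁ * (B * (1 - P₂))).rank := by
        rw [sub_mul_mul_eq B P₁ P₂]
        exact rank_add_le _ _
    _ ≤ (1 - P₁).rank + (1 - P₂).rank :=
        add_le_add (rank_mul_le_left _ _)
          ((rank_mul_le_right _ _).trans (rank_mul_le_right _ _))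

end Matrix

theorem rank_proj_le_general {m₁ m₂ : ℕ} (A₀ B : Matrix (Fin m₁) (Fin m₂) ℝ)
    (P₁ : Matrix (Fin m₁) (Fin m₁) ℝ) (P₂ : Matrix (Fin m₂) (Fin m₂) ℝ)
    (hP₁r : LinearMap.range (Matrix.mulVecLin (1 - P₁)) =
      LinearMap.range (Matrix.mulVecLin A₀))
    (hP₂r : LinearMap.range (Matrix.mulVecLin (1 - P₂)) =
      LinearMap.range (Matrix.mulVecLin A₀ᵀ)) :
    (B - P₁ * B * P₂).rank ≤ 2 * A₀.rank := by
  have h₁ : (1 - P₁).rank = A₀.rank := by rw [rank, rank, hP₁r]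
  have h₂ : (1 - P₂).rank = A₀.rank := by rw [rank, hP₂r, ← rank, rank_transpose]
  calc (B - P₁ * B * P₂).rank ≤ (1 - P₁).rank + (1 - P₂).rank := rank_sub_mul_mul_le B P₁ P₂
    _ = 2 * A₀.rank := by rw [h₁, h₂, two_mul]

/-- P₁, P₂ are the orthogonal projections onto the orthogonal complements of the
column space and row space of A₀ (characterized as symmetric idempotent matrices
whose complementary projections have range equal to those singular subspaces).
Then rank(P_{A₀}(B)) = rank(B - P₁ B P₂) ≤ 2 rank(A₀). -/
theorem rank_proj_le {m₁ m₂ : ℕ} (A₀ B : Matrix (Fin m₁) (Fin m₂) ℝ)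
    (P₁ : Matrix (Fin m₁) (Fin m₁) ℝ) (P₂ : Matrix (Fin m₂) (Fin m₂) ℝ)
    (hP₁s : P₁ᵀ = P₁) (hP₁i : P₁ * P₁ = P₁)
    (hP₁r : LinearMap.range (Matrix.mulVecLin (1 - P₁)) =
      LinearMap.range (Matrix.mulVecLin A₀))
    (hP₂s : P₂ᵀ = P₂) (hP₂i : P₂ * P₂ = P₂)
    (hP₂r : LinearMap.range (Matrix.mulVecLin (1 - P₂)) =
      LinearMap.range (Matrix.mulVecLin A₀ᵀ)) :
    (B - P₁ * B * P₂).rank ≤ 2 * A₀.rank :=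
  rank_proj_le_general A₀ B P₁ P₂ hP₁r hP₂r
end

section
/- Let A₀, Â ∈ ℝ^{m₁×m₂} and P_{A₀}, P_{A₀}^⊥ as above. Then ‖Â‖₁ ≥ ‖A₀‖₁ + ‖P_{A₀}^⊥(Â − A₀)‖₁ − ‖P_{A₀}(Â − A₀)‖₁, where ‖·‖₁ is the nuclear norm. -/
open Matrix
/-!
For any two Bessel families `u`, `w` the nuclear norm dominates `∑ i, u i ⬝ᵥ (A *ᵥ w i)`, with
equality for the left and right singular vectors of `A`. Compressing the singular vectors of
`P₁ Δ P₂` by `P₁`, `P₂` and those of `A₀` by `1 - P₁`, `1 - P₂` gives Bessel families that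
witness `‖A₀‖₁ + ‖P₁ Δ P₂‖₁ ≤ ‖A₀ + P₁ Δ P₂‖₁` (pinching), because `A₀` lives in the complementary
blocks. The triangle inequality for `A₀ + P₁ Δ P₂ = Â - (Δ - P₁ Δ P₂)` then gives the claim.
-/

open Finset

theorem Matrix.mul_eq_zero_of_range_one_sub_eq {m n : Type*} [Fintype m] [DecidableEq m]
    [Fintype n] [DecidableEq n] {P : Matrix m m ℝ} {M : Matrix m n ℝ} (hP : IsIdempotentElem P)
    (h : LinearMap.range (mulVecLin (1 - P)) = LinearMap.range (mulVecLin M)) : P * M = 0 := by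
  have hker : LinearMap.range (mulVecLin M) ≤ LinearMap.ker (mulVecLin P) := by
    rw [← h, LinearMap.range_le_ker_iff, ← mulVecLin_mul, hP.mul_one_sub_self, mulVecLin_zero]
  rw [LinearMap.range_le_ker_iff, ← mulVecLin_mul] at hker
  exact toLin'.injective (by rw [toLin'_apply', hker, map_zero])

section Bessel

variable {ι κ n : Type*} [Fintype ι] [Fintype κ] [Fintype n]

theorem Matrix.mulVec_dotProduct {m : Type*} [Fintype m] (M : Matrix m n ℝ) (x : n → ℝ)
    (y : m → ℝ) : (M *ᵥ x) ⬝ᵥ y = x ⬝ᵥ (Mᵀ *ᵥ y) := by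
  rw [dotProduct_comm, dotProduct_mulVec, ← mulVec_transpose, dotProduct_comm]

theorem IsStarProjection.transpose_eq {P : Matrix n n ℝ} (hP : IsStarProjection P) : Pᵀ = P :=
  (isHermitian_iff_isSymm.mp hP.isSelfAdjoint).eq

theorem IsStarProjection.mulVec_dotProduct_mulVec_self {P : Matrix n n ℝ}
    (hP : IsStarProjection P) (a : n → ℝ) : (P *ᵥ a) ⬝ᵥ (P *ᵥ a) = a ⬝ᵥ (P *ᵥ a) := by
  rw [mulVec_dotProduct, hP.transpose_eq, mulVec_mulVec, hP.isIdempotentElem.eq]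

theorem IsStarProjection.mulVec_dotProduct_add_one_sub [DecidableEq n] {P : Matrix n n ℝ}
    (hP : IsStarProjection P) (a : n → ℝ) :
    (P *ᵥ a) ⬝ᵥ (P *ᵥ a) + ((1 - P) *ᵥ a) ⬝ᵥ ((1 - P) *ᵥ a) = a ⬝ᵥ a := by
  rw [hP.mulVec_dotProduct_mulVec_self, hP.one_sub.mulVec_dotProduct_mulVec_self,
    ← dotProduct_add, ← add_mulVec, add_sub_cancel, one_mulVec]

theorem IsStarProjection.mulVec_dotProduct_mulVec_mulVec {m : Type*} [Fintype m]
    {P : Matrix m m ℝ} (hP : IsStarProjection P) (X : Matrix m n ℝ) (Q : Matrix n n ℝ)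
    (x : m → ℝ) (y : n → ℝ) : (P *ᵥ x) ⬝ᵥ (X *ᵥ (Q *ᵥ y)) = x ⬝ᵥ ((P * X * Q) *ᵥ y) := by
  rw [mulVec_dotProduct, hP.transpose_eq, mulVec_mulVec, mulVec_mulVec]

def IsBessel (u : ι → n → ℝ) : Prop :=
  ∀ a, ∑ i, (u i ⬝ᵥ a) ^ 2 ≤ a ⬝ᵥ a

theorem isBessel_of_orthogonal {u : ι → n → ℝ} (horth : Pairwise fun i j ↦ u i ⬝ᵥ u j = 0)
    (hle : ∀ i, u i ⬝ᵥ u i ≤ 1) : IsBessel u := by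
  intro a
  set c := fun i ↦ u i ⬝ᵥ a
  set s := ∑ i, c i • u i
  have hsa : s ⬝ᵥ a = ∑ i, c i ^ 2 := by
    simp only [s, sum_dotProduct, smul_dotProduct, smul_eq_mul, c, sq]
  have hss : s ⬝ᵥ s ≤ ∑ i, c i ^ 2 := by
    have hdiag : ∀ i, s ⬝ᵥ c i • u i = c i ^ 2 * (u i ⬝ᵥ u i) := fun i ↦ by
      rw [sum_dotProduct, Fintype.sum_eq_single i fun j hj ↦ by
        rw [smul_dotProduct, dotProduct_smul, horth hj, smul_zero, smul_zero]]
      simp only [smul_dotProduct, dotProduct_smul, smul_eq_mul]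
      ring
    rw [dotProduct_sum]
    simp only [hdiag]
    exact sum_le_sum fun i _ ↦ mul_le_of_le_one_right (sq_nonneg _) (hle i)
  have hnonneg : 0 ≤ (a - s) ⬝ᵥ (a - s) := sum_nonneg fun i _ ↦ mul_self_nonneg _
  rw [sub_dotProduct, dotProduct_sub, dotProduct_sub, dotProduct_comm a s, hsa] at hnonneg
  linarith

theorem IsBessel.neg {u : ι → n → ℝ} (hu : IsBessel u) : IsBessel (-u) := fun a ↦ by
  simpa only [Pi.neg_apply, neg_dotProduct, neg_sq] using hu a

theorem IsBessel.sumElim_mulVec [DecidableEq n] {P : Matrix n n ℝ} (hP : IsStarProjection P)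
    {u : ι → n → ℝ} {w : κ → n → ℝ} (hu : IsBessel u) (hw : IsBessel w) :
    IsBessel (Sum.elim (fun i ↦ P *ᵥ u i) (fun k ↦ (1 - P) *ᵥ w k)) := fun a ↦ by
  rw [Fintype.sum_sum_type]
  simp only [Sum.elim_inl, Sum.elim_inr, mulVec_dotProduct, hP.transpose_eq,
    hP.one_sub.transpose_eq]
  calc _ ≤ (P *ᵥ a) ⬝ᵥ (P *ᵥ a) + ((1 - P) *ᵥ a) ⬝ᵥ ((1 - P) *ᵥ a) := add_le_add (hu _) (hw _)
    _ = a ⬝ᵥ a := hP.mulVec_dotProduct_add_one_sub a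

end Bessel

namespace Matrix

variable {m n : ℕ} (A : Matrix (Fin m) (Fin n) ℝ)

noncomputable def singularValue (i : Fin n) : ℝ :=
  √((isHermitian_conjTranspose_mul_self A).eigenvalues i)

noncomputable def rightSingularVector (i : Fin n) : Fin n → ℝ :=
  (isHermitian_conjTranspose_mul_self A).eigenvectorBasis i

/-- Zero when `A.singularValue i = 0`, since `0⁻¹ = 0`. -/
noncomputable def leftSingularVector (i : Fin n) : Fin m → ℝ :=
  (A.singularValue i)⁻¹ • (A *ᵥ A.rightSingularVector i)

theorem nuclearNorm_eq_sum_singularValue : nuclearNorm A = ∑ i, A.singularValue i := rfl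

theorem singularValue_nonneg (i : Fin n) : 0 ≤ A.singularValue i := Real.sqrt_nonneg _

theorem rightSingularVector_dotProduct (i j : Fin n) :
    A.rightSingularVector i ⬝ᵥ A.rightSingularVector j = if i = j then 1 else 0 := by
  have h := orthonormal_iff_ite.mp
    (isHermitian_conjTranspose_mul_self A).eigenvectorBasis.orthonormal i j
  rwa [EuclideanSpace.inner_eq_star_dotProduct, star_trivial, dotProduct_comm] at h

theorem sum_dotProduct_smul_rightSingularVector (x : Fin n → ℝ) :
    ∑ j, (A.rightSingularVector j ⬝ᵥ x) • A.rightSingularVector j = x := by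
  have h := congrArg WithLp.ofLp
    ((isHermitian_conjTranspose_mul_self A).eigenvectorBasis.sum_repr' (WithLp.toLp 2 x))
  simpa [rightSingularVector, EuclideanSpace.inner_eq_star_dotProduct, dotProduct_comm] using h

theorem mulVec_rightSingularVector_dotProduct (i j : Fin n) :
    (A *ᵥ A.rightSingularVector i) ⬝ᵥ (A *ᵥ A.rightSingularVector j) =
      if i = j then A.singularValue i ^ 2 else 0 := by
  rw [mulVec_dotProduct, mulVec_mulVec, ← conjTranspose_eq_transpose_of_trivial,
    rightSingularVector, rightSingularVector, IsHermitian.mulVec_eigenvectorBasis,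
    dotProduct_smul, ← rightSingularVector, ← rightSingularVector,
    rightSingularVector_dotProduct, singularValue,
    Real.sq_sqrt (eigenvalues_conjTranspose_mul_self_nonneg A i)]
  split_ifs with h <;> simp [h]

theorem mulVec_rightSingularVector (i : Fin n) :
    A *ᵥ A.rightSingularVector i = A.singularValue i • A.leftSingularVector i := by
  by_cases h : A.singularValue i = 0
  · rw [h, zero_smul, ← dotProduct_self_eq_zero, mulVec_rightSingularVector_dotProduct,
      if_pos rfl, h, sq, zero_mul]
  · rw [leftSingularVector, smul_smul, mul_inv_cancel₀ h, one_smul]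

theorem leftSingularVector_dotProduct (i j : Fin n) :
    A.leftSingularVector i ⬝ᵥ A.leftSingularVector j =
      if i = j ∧ A.singularValue i ≠ 0 then 1 else 0 := by
  rw [leftSingularVector, leftSingularVector, smul_dotProduct, dotProduct_smul,
    mulVec_rightSingularVector_dotProduct]
  split_ifs with h₁ h₂ h₂
  · obtain ⟨rfl, hσ⟩ := h₂
    simp only [smul_eq_mul]
    field_simp
  · simp_all
  · simp_all
  · simp

theorem isBessel_rightSingularVector : IsBessel A.rightSingularVector :=
  isBessel_of_orthogonal (fun i j hij ↦ by simp [rightSingularVector_dotProduct, hij])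
    fun i ↦ by rw [rightSingularVector_dotProduct, if_pos rfl]

theorem leftSingularVector_dotProduct_self_le_one (i : Fin n) :
    A.leftSingularVector i ⬝ᵥ A.leftSingularVector i ≤ 1 := by
  rw [leftSingularVector_dotProduct]
  split_ifs <;> norm_num

theorem isBessel_leftSingularVector : IsBessel A.leftSingularVector :=
  isBessel_of_orthogonal (fun i j hij ↦ by simp [leftSingularVector_dotProduct, hij])
    A.leftSingularVector_dotProduct_self_le_one

theorem dotProduct_mulVec_eq_sum_singularValue (x : Fin m → ℝ) (y : Fin n → ℝ) :
    x ⬝ᵥ (A *ᵥ y) = ∑ j, A.singularValue j *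
      ((x ⬝ᵥ A.leftSingularVector j) * (A.rightSingularVector j ⬝ᵥ y)) := by
  conv_lhs => rw [← A.sum_dotProduct_smul_rightSingularVector y]
  simp only [mulVec_sum, mulVec_smul, mulVec_rightSingularVector, dotProduct_sum,
    dotProduct_smul, smul_eq_mul]
  exact sum_congr rfl fun j _ ↦ by ring

theorem sum_leftSingularVector_dotProduct_mulVec :
    ∑ j, A.leftSingularVector j ⬝ᵥ (A *ᵥ A.rightSingularVector j) = nuclearNorm A := by
  rw [nuclearNorm_eq_sum_singularValue]
  refine sum_congr rfl fun j _ ↦ ?_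
  rw [mulVec_rightSingularVector, dotProduct_smul, leftSingularVector_dotProduct, smul_eq_mul]
  by_cases h : A.singularValue j = 0 <;> simp [h]

end Matrix

section NuclearNorm

variable {m n : ℕ}

theorem sum_mul_le_one_of_sum_sq_le_one {ι : Type*} (s : Finset ι) {f g : ι → ℝ}
    (hf : ∑ i ∈ s, f i ^ 2 ≤ 1) (hg : ∑ i ∈ s, g i ^ 2 ≤ 1) : ∑ i ∈ s, f i * g i ≤ 1 :=
  (Real.sum_mul_le_sqrt_mul_sqrt s f g).trans <|
    mul_le_one₀ (Real.sqrt_le_one.mpr hf) (Real.sqrt_nonneg _) (Real.sqrt_le_one.mpr hg)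

/-- Weak duality with the operator norm: `∑ i, u i (w i)ᵀ` is a contraction. -/
theorem sum_dotProduct_mulVec_le_nuclearNorm {ι : Type*} [Fintype ι]
    (A : Matrix (Fin m) (Fin n) ℝ) {u : ι → Fin m → ℝ} {w : ι → Fin n → ℝ}
    (hu : IsBessel u) (hw : IsBessel w) : ∑ i, u i ⬝ᵥ (A *ᵥ w i) ≤ nuclearNorm A := by
  have hcoeff :
      ∀ j, ∑ i, (u i ⬝ᵥ A.leftSingularVector j) * (A.rightSingularVector j ⬝ᵥ w i) ≤ 1 :=
    fun j ↦ sum_mul_le_one_of_sum_sq_le_one _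
      ((hu _).trans (A.leftSingularVector_dotProduct_self_le_one j))
      (by simpa only [dotProduct_comm _ (w _), A.rightSingularVector_dotProduct, ↓reduceIte]
        using hw (A.rightSingularVector j))
  calc ∑ i, u i ⬝ᵥ (A *ᵥ w i)
      = ∑ j, A.singularValue j *
          ∑ i, (u i ⬝ᵥ A.leftSingularVector j) * (A.rightSingularVector j ⬝ᵥ w i) := by
        simp only [dotProduct_mulVec_eq_sum_singularValue, mul_sum]
        exact sum_comm
    _ ≤ ∑ j, A.singularValue j * 1 :=
        sum_le_sum fun j _ ↦ mul_le_mul_of_nonneg_left (hcoeff j) (A.singularValue_nonneg j)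
    _ = nuclearNorm A := by simp [nuclearNorm_eq_sum_singularValue]

theorem nuclearNorm_sub_le (A B : Matrix (Fin m) (Fin n) ℝ) :
    nuclearNorm (A - B) ≤ nuclearNorm A + nuclearNorm B := by
  set u := (A - B).leftSingularVector
  set v := (A - B).rightSingularVector
  have hu : IsBessel u := (A - B).isBessel_leftSingularVector
  have hv : IsBessel v := (A - B).isBessel_rightSingularVector
  calc nuclearNorm (A - B) = ∑ j, u j ⬝ᵥ ((A - B) *ᵥ v j) :=
        ((A - B).sum_leftSingularVector_dotProduct_mulVec).symm
    _ = ∑ j, u j ⬝ᵥ (A *ᵥ v j) + ∑ j, (-u) j ⬝ᵥ (B *ᵥ v j) := by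
        simp only [sub_mulVec, dotProduct_sub, sum_sub_distrib, Pi.neg_apply, neg_dotProduct,
          sum_neg_distrib]
        ring
    _ ≤ nuclearNorm A + nuclearNorm B :=
        add_le_add (sum_dotProduct_mulVec_le_nuclearNorm A hu hv)
          (sum_dotProduct_mulVec_le_nuclearNorm B hu.neg hv)

theorem nuclearNorm_pinching_le {P : Matrix (Fin m) (Fin m) ℝ} {Q : Matrix (Fin n) (Fin n) ℝ}
    (hP : IsStarProjection P) (hQ : IsStarProjection Q) (X : Matrix (Fin m) (Fin n) ℝ) :
    nuclearNorm (P * X * Q) + nuclearNorm ((1 - P) * X * (1 - Q)) ≤ nuclearNorm X := by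
  set B := P * X * Q
  set C := (1 - P) * X * (1 - Q)
  calc nuclearNorm B + nuclearNorm C
      = ∑ k, Sum.elim (fun i ↦ P *ᵥ B.leftSingularVector i)
            (fun i ↦ (1 - P) *ᵥ C.leftSingularVector i) k ⬝ᵥ
          (X *ᵥ Sum.elim (fun i ↦ Q *ᵥ B.rightSingularVector i)
            (fun i ↦ (1 - Q) *ᵥ C.rightSingularVector i) k) := by
        simp only [Fintype.sum_sum_type, Sum.elim_inl, Sum.elim_inr,
          hP.mulVec_dotProduct_mulVec_mulVec, hP.one_sub.mulVec_dotProduct_mulVec_mulVec,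
          sum_leftSingularVector_dotProduct_mulVec, B, C]
    _ ≤ nuclearNorm X := sum_dotProduct_mulVec_le_nuclearNorm X
        (B.isBessel_leftSingularVector.sumElim_mulVec hP C.isBessel_leftSingularVector)
        (B.isBessel_rightSingularVector.sumElim_mulVec hQ C.isBessel_rightSingularVector)

theorem nuclearNorm_add_le_of_mul_eq_zero {P : Matrix (Fin m) (Fin m) ℝ}
    {Q : Matrix (Fin n) (Fin n) ℝ} (hP : IsStarProjection P) (hQ : IsStarProjection Q)
    {A : Matrix (Fin m) (Fin n) ℝ} (hPA : P * A = 0) (hAQ : A * Q = 0)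
    (B : Matrix (Fin m) (Fin n) ℝ) :
    nuclearNorm A + nuclearNorm (P * B * Q) ≤ nuclearNorm (A + P * B * Q) := by
  have hcompress : P * (A + P * B * Q) * Q = P * B * Q := by
    rw [Matrix.mul_add, hPA, zero_add, ← Matrix.mul_assoc, ← Matrix.mul_assoc,
      hP.isIdempotentElem.eq, Matrix.mul_assoc, hQ.isIdempotentElem.eq]
  have hcompress_compl : (1 - P) * (A + P * B * Q) * (1 - Q) = A := by
    rw [Matrix.mul_add, Matrix.sub_mul, Matrix.one_mul, hPA, sub_zero, ← Matrix.mul_assoc,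
      ← Matrix.mul_assoc, hP.one_sub_mul_self, Matrix.zero_mul, Matrix.zero_mul, add_zero,
      Matrix.mul_sub, Matrix.mul_one, hAQ, sub_zero]
  simpa only [hcompress, hcompress_compl, add_comm] using
    nuclearNorm_pinching_le hP hQ (A + P * B * Q)

end NuclearNorm

/-- ‖Â‖₁ ≥ ‖A₀‖₁ + ‖P_{A₀}^⊥(Â − A₀)‖₁ − ‖P_{A₀}(Â − A₀)‖₁, where
P_{A₀}^⊥(B) = P₁ B P₂ and P_{A₀}(B) = B − P₁ B P₂ with P₁, P₂ the orthogonal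
projections onto the orthogonal complements of the column/row spaces of A₀. -/
theorem nuclearNorm_decomposition_lower {m₁ m₂ : ℕ}
    (A₀ Ahat : Matrix (Fin m₁) (Fin m₂) ℝ)
    (P₁ : Matrix (Fin m₁) (Fin m₁) ℝ) (P₂ : Matrix (Fin m₂) (Fin m₂) ℝ)
    (hP₁s : P₁ᵀ = P₁) (hP₁i : P₁ * P₁ = P₁)
    (hP₁r : LinearMap.range (Matrix.mulVecLin (1 - P₁)) =
      LinearMap.range (Matrix.mulVecLin A₀))
    (hP₂s : P₂ᵀ = P₂) (hP₂i : P₂ * P₂ = P₂)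
    (hP₂r : LinearMap.range (Matrix.mulVecLin (1 - P₂)) =
      LinearMap.range (Matrix.mulVecLin A₀ᵀ)) :
    nuclearNorm A₀ + nuclearNorm (P₁ * (Ahat - A₀) * P₂)
        - nuclearNorm ((Ahat - A₀) - P₁ * (Ahat - A₀) * P₂) ≤ nuclearNorm Ahat := by
  have hP₁ : IsStarProjection P₁ := ⟨hP₁i, isHermitian_iff_isSymm.mpr hP₁s⟩
  have hP₂ : IsStarProjection P₂ := ⟨hP₂i, isHermitian_iff_isSymm.mpr hP₂s⟩
  have hP₁A : P₁ * A₀ = 0 := mul_eq_zero_of_range_one_sub_eq hP₁i hP₁r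
  have hAP₂ : A₀ * P₂ = 0 := by
    simpa [hP₂s] using congrArg transpose (mul_eq_zero_of_range_one_sub_eq hP₂i hP₂r)
  set Δ := Ahat - A₀
  have hdecomp := nuclearNorm_add_le_of_mul_eq_zero hP₁ hP₂ hP₁A hAP₂ Δ
  have htriangle := nuclearNorm_sub_le Ahat (Δ - P₁ * Δ * P₂)
  rw [show Ahat - (Δ - P₁ * Δ * P₂) = A₀ + P₁ * Δ * P₂ by simp only [Δ]; abel] at htriangle
  linarith
end

section
/- Let Q : ℝ^{m₁×m₂} → ℝ be defined by Q(A)² = (1/n) Σ_{i=1}^n (Y_i − ⟨X_i, A⟩)², with Y_i = ⟨X_i, A₀⟩ + σξ_i. If := argmin over {‖A‖_∞ ≤ a} of Q(A)² + λ‖A‖₁ (for any minimizer with ‖A₀‖_∞ ≤ a), then (1/n)‖Ω(A₀ − Â)‖₂² + λ‖Â‖₁ ≤ 2‖Σ‖·‖A₀ − Â‖₁ + λ‖A₀‖₁, where Σ = (σ/n)Σ ξ_i X_i, Ω(A)_i = ⟨X_i, A⟩, ‖Σ‖ is the operator norm and ‖·‖₁ the nuclear norm. -/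
/-!
Expanding the squares, the minimality of `Ahat` against the competitor `A₀` says that
`(1/n)‖Ω(A₀ - Ahat)‖₂² + 2⟨Σ, A₀ - Ahat⟩ + λ‖Ahat‖₁ ≤ λ‖A₀‖₁`: the noise terms `σ²ξᵢ²` cancel
and the cross terms sum to the trace pairing with `Σ`. Trace duality bounds
`|⟨Σ, D⟩| ≤ ‖Σ‖‖D‖₁`: in an orthonormal eigenbasis `(vᵢ)` of `DᵀD` one has
`⟨Σ, D⟩ = ∑ ⟨Σvᵢ, Dvᵢ⟩`, with `‖Σvᵢ‖ ≤ ‖Σ‖` and `‖Dvᵢ‖` the singular values of `D`.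
-/

open Matrix
open Finset

open scoped RealInnerProductSpace

section
variable {m₁ m₂ : ℕ}

lemma mip_sub_right (X A B : Matrix (Fin m₁) (Fin m₂) ℝ) :
    mip X (A - B) = mip X A - mip X B := by
  simp only [mip, Matrix.mul_sub, Matrix.trace_sub]

lemma mip_smul_left (c : ℝ) (A B : Matrix (Fin m₁) (Fin m₂) ℝ) :
    mip (c • A) B = c * mip A B := by
  simp only [mip, Matrix.transpose_smul, Matrix.smul_mul, Matrix.trace_smul, smul_eq_mul]

lemma mip_sum_left {ι : Type*} (s : Finset ι) (A : ι → Matrix (Fin m₁) (Fin m₂) ℝ)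
    (B : Matrix (Fin m₁) (Fin m₂) ℝ) :
    mip (∑ i ∈ s, A i) B = ∑ i ∈ s, mip (A i) B := by
  simp only [mip, Matrix.transpose_sum, Matrix.sum_mul, Matrix.trace_sum]

lemma mip_eq_sum_inner (S D : Matrix (Fin m₁) (Fin m₂) ℝ)
    (b : OrthonormalBasis (Fin m₂) ℝ (EuclideanSpace ℝ (Fin m₂))) :
    mip S D = ∑ i, ⟪toEuclideanLin S (b i), toEuclideanLin D (b i)⟫ := by
  have htrace : mip S D = LinearMap.trace ℝ _ (toEuclideanLin (Sᵀ * D)) := by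
    rw [toEuclideanLin_eq_toLin_orthonormal, Matrix.trace_toLin_eq, mip]
  rw [htrace, LinearMap.trace_eq_sum_inner _ b]
  refine Finset.sum_congr rfl fun i _ => ?_
  rw [← conjTranspose_eq_transpose_of_trivial, toLpLin_mul (q := 2), LinearMap.comp_apply,
    ← LinearMap.adjoint_inner_right]
  exact congrArg (fun T => ⟪b i, T (toEuclideanLin D (b i))⟫)
    (toEuclideanLin_conjTranspose_eq_adjoint S)

lemma norm_toEuclideanLin_apply_le_opNorm (S : Matrix (Fin m₁) (Fin m₂) ℝ)
    {v : EuclideanSpace ℝ (Fin m₂)} (hv : ‖v‖ = 1) :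
    ‖toEuclideanLin S v‖ ≤ opNorm S := by
  simpa [opNorm, hv] using (LinearMap.toContinuousLinearMap (toEuclideanLin S)).le_opNorm v

lemma norm_toEuclideanLin_eigenvectorBasis (D : Matrix (Fin m₁) (Fin m₂) ℝ) (i : Fin m₂) :
    ‖toEuclideanLin D ((isHermitian_conjTranspose_mul_self D).eigenvectorBasis i)‖ =
      Real.sqrt ((isHermitian_conjTranspose_mul_self D).eigenvalues i) := by
  set hH := isHermitian_conjTranspose_mul_self D
  set v := hH.eigenvectorBasis i
  have hsq : ‖toEuclideanLin D v‖ ^ 2 = hH.eigenvalues i := by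
    have heig : toEuclideanLin (Dᴴ * D) v = hH.eigenvalues i • v :=
      WithLp.ofLp_injective 2 (hH.mulVec_eigenvectorBasis i)
    rw [← real_inner_self_eq_norm_sq, ← LinearMap.adjoint_inner_right,
      ← toEuclideanLin_conjTranspose_eq_adjoint, ← LinearMap.comp_apply, ← toLpLin_mul, heig,
      real_inner_smul_right, real_inner_self_eq_norm_sq, hH.eigenvectorBasis.orthonormal.1 i]
    ring
  rw [← hsq, Real.sqrt_sq (norm_nonneg _)]

lemma abs_mip_le_opNorm_mul_nuclearNorm (S D : Matrix (Fin m₁) (Fin m₂) ℝ) :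
    |mip S D| ≤ opNorm S * nuclearNorm D := by
  set hH := isHermitian_conjTranspose_mul_self D
  rw [mip_eq_sum_inner S D hH.eigenvectorBasis, nuclearNorm, Finset.mul_sum]
  refine (Finset.abs_sum_le_sum_abs _ _).trans (Finset.sum_le_sum fun i _ => ?_)
  rw [← norm_toEuclideanLin_eigenvectorBasis]
  exact (abs_real_inner_le_norm _ _).trans (mul_le_mul_of_nonneg_right
    (norm_toEuclideanLin_apply_le_opNorm S (hH.eigenvectorBasis.orthonormal.1 i)) (norm_nonneg _))

lemma empirical_risk_eq_add {n : ℕ} (X : Fin n → Matrix (Fin m₁) (Fin m₂) ℝ)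
    (ξ : Fin n → ℝ) (σ : ℝ) (A₀ A : Matrix (Fin m₁) (Fin m₂) ℝ) (Y : Fin n → ℝ)
    (hY : ∀ i, Y i = mip (X i) A₀ + σ * ξ i) :
    (1 / n : ℝ) * ∑ i, (Y i - mip (X i) A) ^ 2 =
      (1 / n : ℝ) * ∑ i, (Y i - mip (X i) A₀) ^ 2 + (1 / n : ℝ) * ∑ i, mip (X i) (A₀ - A) ^ 2 +
        2 * mip ((σ / n) • ∑ i, ξ i • X i) (A₀ - A) := by
  have hresidual : ∀ i, Y i - mip (X i) A = mip (X i) (A₀ - A) + σ * ξ i := fun i => by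
    rw [hY, mip_sub_right]; ring
  have hnoise : ∀ i, Y i - mip (X i) A₀ = σ * ξ i := fun i => by
    rw [hY]; ring
  simp only [hresidual, hnoise, mip_smul_left, mip_sum_left, Finset.mul_sum,
    ← Finset.sum_add_distrib]
  refine Finset.sum_congr rfl fun i _ => ?_
  ring

end

theorem basic_inequality_general {m₁ m₂ n : ℕ}
    (X : Fin n → Matrix (Fin m₁) (Fin m₂) ℝ) (ξ : Fin n → ℝ) (σ lam a : ℝ)
    (A₀ Ahat : Matrix (Fin m₁) (Fin m₂) ℝ)
    (hA₀ : ∀ j k, |A₀ j k| ≤ a)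
    (Y : Fin n → ℝ) (hY : ∀ i, Y i = mip (X i) A₀ + σ * ξ i)
    (hmin : ∀ A : Matrix (Fin m₁) (Fin m₂) ℝ, (∀ j k, |A j k| ≤ a) →
      (1 / n : ℝ) * ∑ i, (Y i - mip (X i) Ahat) ^ 2 + lam * nuclearNorm Ahat ≤
        (1 / n : ℝ) * ∑ i, (Y i - mip (X i) A) ^ 2 + lam * nuclearNorm A) :
    (1 / n : ℝ) * ∑ i, (mip (X i) (A₀ - Ahat)) ^ 2 + lam * nuclearNorm Ahat ≤
      2 * opNorm ((σ / n) • ∑ i, ξ i • X i) * nuclearNorm (A₀ - Ahat)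
        + lam * nuclearNorm A₀ := by
  have hcompare := hmin A₀ hA₀
  rw [empirical_risk_eq_add X ξ σ A₀ Ahat Y hY] at hcompare
  have hneg_abs := neg_abs_le (mip ((σ / n) • ∑ i, ξ i • X i) (A₀ - Ahat))
  have hduality := abs_mip_le_opNorm_mul_nuclearNorm ((σ / n) • ∑ i, ξ i • X i) (A₀ - Ahat)
  linarith

/-- Basic inequality for the nuclear-norm penalized least squares estimator:
(1/n)‖Ω(A₀ − Â)‖₂² + λ‖Â‖₁ ≤ 2‖Σ‖·‖A₀ − Â‖₁ + λ‖A₀‖₁. -/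
theorem basic_inequality {m₁ m₂ n : ℕ} (hn : 0 < n)
    (X : Fin n → Matrix (Fin m₁) (Fin m₂) ℝ) (ξ : Fin n → ℝ) (σ lam a : ℝ)
    (hσ : 0 < σ) (hlam : 0 < lam)
    (A₀ Ahat : Matrix (Fin m₁) (Fin m₂) ℝ)
    (hA₀ : ∀ j k, |A₀ j k| ≤ a) (hAhat : ∀ j k, |Ahat j k| ≤ a)
    (Y : Fin n → ℝ) (hY : ∀ i, Y i = mip (X i) A₀ + σ * ξ i)
    (hmin : ∀ A : Matrix (Fin m₁) (Fin m₂) ℝ, (∀ j k, |A j k| ≤ a) →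
      (1 / n : ℝ) * ∑ i, (Y i - mip (X i) Ahat) ^ 2 + lam * nuclearNorm Ahat ≤
        (1 / n : ℝ) * ∑ i, (Y i - mip (X i) A) ^ 2 + lam * nuclearNorm A) :
    (1 / n : ℝ) * ∑ i, (mip (X i) (A₀ - Ahat)) ^ 2 + lam * nuclearNorm Ahat ≤
      2 * opNorm ((σ / n) • ∑ i, ξ i • X i) * nuclearNorm (A₀ - Ahat)
        + lam * nuclearNorm A₀ :=
  basic_inequality_general X ξ σ lam a A₀ Ahat hA₀ Y hY hmin
end

section
/- Let Z be a nonnegative random variable and suppose there exist ν₁, ν₂ > 0, d ≥ 2 and t* > 0 such that P(Z > t) ≤ d·exp(−t²ν₁) for t ≤ t* and P(Z > t) ≤ d·exp(−tν₂) for t ≥ t*. Then E[Z^{2 log d}]^{1/(2 log d)} ≤ √e · (log(d)·ν₁^{−log d}·Γ(log d) + 2 log(d)·ν₂^{−2 log d}·Γ(2 log d))^{1/(2 log d)}. -/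
/-!
By the layer cake formula, `E[Z^p] = ∫₀^∞ P(Z > t^{1/p}) dt` for `p = 2 log d`. Bounding the
tail by the sum of the two tail bounds, the sub-Gaussian and sub-exponential parts become the
Gamma integrals `∫₀^∞ exp(-ν t^{1/m}) dt = m ν^{-m} Γ(m)` with `m = log d` and `m = 2 log d`.
The prefactor `d` leaves the `p`-th root as `d^{1/(2 log d)} = √e`.
-/

open MeasureTheory Real Set
open scoped ENNReal

theorem lintegral_exp_neg_mul_rpow_one_div {m b : ℝ} (hm : 0 < m) (hb : 0 < b) :
    ∫⁻ t in Ioi 0, ENNReal.ofReal (exp (-b * t ^ (1 / m))) =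
      ENNReal.ofReal (m * b ^ (-m) * Gamma m) := by
  have hint : IntegrableOn (fun t : ℝ => exp (-b * t ^ (1 / m))) (Ioi 0) := by
    simpa using integrableOn_rpow_mul_exp_neg_mul_rpow (s := 0) neg_one_lt_zero
      (one_div_pos.2 hm) hb
  rw [← ofReal_integral_eq_lintegral_ofReal hint (ae_of_all _ fun t => (exp_pos _).le),
    integral_exp_neg_mul_rpow (one_div_pos.2 hm) hb, one_div_one_div, Gamma_add_one hm.ne',
    show (-1 : ℝ) / (1 / m) = -m by field_simp]
  ring_nf

theorem lintegral_ofReal_rpow_eq_lintegral_meas_lt {Ω : Type*} [MeasurableSpace Ω]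
    (μ : Measure Ω) {Z : Ω → ℝ} (hZ : AEMeasurable Z μ) (hpos : ∀ ω, 0 ≤ Z ω) {p : ℝ}
    (hp : 0 < p) :
    ∫⁻ ω, ENNReal.ofReal (Z ω ^ p) ∂μ = ∫⁻ t in Ioi 0, μ {ω | t ^ (1 / p) < Z ω} := by
  rw [lintegral_eq_lintegral_meas_lt μ (ae_of_all _ fun ω => rpow_nonneg (hpos ω) p)
    (hZ.pow_const p)]
  refine setLIntegral_congr_fun measurableSet_Ioi fun t ht => ?_
  congr 1
  ext ω
  rw [mem_ofPred_eq, mem_ofPred_eq, one_div, rpow_inv_lt_iff_of_pos (le_of_lt ht) (hpos ω) hp]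

theorem lintegral_rpow_two_mul_le_of_tail_le {Ω : Type*} [MeasurableSpace Ω] {μ : Measure Ω}
    {Z : Ω → ℝ} (hZ : AEMeasurable Z μ) (hpos : ∀ ω, 0 ≤ Z ω) {c ν₁ ν₂ L : ℝ} (hc : 0 ≤ c)
    (hν₁ : 0 < ν₁) (hν₂ : 0 < ν₂) (hL : 0 < L)
    (htail : ∀ s, 0 < s →
      μ {ω | s < Z ω} ≤ ENNReal.ofReal (c * (exp (-ν₁ * s ^ 2) + exp (-ν₂ * s)))) :
    ∫⁻ ω, ENNReal.ofReal (Z ω ^ (2 * L)) ∂μ ≤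
      ENNReal.ofReal (c * (L * ν₁ ^ (-L) * Gamma L +
        2 * L * ν₂ ^ (-(2 * L)) * Gamma (2 * L))) := by
  have hp : 0 < 2 * L := by positivity
  calc ∫⁻ ω, ENNReal.ofReal (Z ω ^ (2 * L)) ∂μ
      = ∫⁻ t in Ioi 0, μ {ω | t ^ (1 / (2 * L)) < Z ω} :=
        lintegral_ofReal_rpow_eq_lintegral_meas_lt μ hZ hpos hp
    _ ≤ ∫⁻ t in Ioi 0, ENNReal.ofReal c * (ENNReal.ofReal (exp (-ν₁ * t ^ (1 / L))) +
          ENNReal.ofReal (exp (-ν₂ * t ^ (1 / (2 * L))))) := by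
        refine lintegral_mono_ae <| (ae_restrict_iff' measurableSet_Ioi).2 <|
          ae_of_all _ fun t (ht : 0 < t) => ?_
        have hsq : (t ^ (1 / (2 * L))) ^ 2 = t ^ (1 / L) := by
          rw [← rpow_mul_natCast ht.le]
          congr 1
          field_simp
          norm_num
        rw [← ENNReal.ofReal_add (exp_pos _).le (exp_pos _).le, ← ENNReal.ofReal_mul hc, ← hsq]
        exact htail _ (rpow_pos_of_pos ht _)
    _ = ENNReal.ofReal c * (ENNReal.ofReal (L * ν₁ ^ (-L) * Gamma L) +
          ENNReal.ofReal (2 * L * ν₂ ^ (-(2 * L)) * Gamma (2 * L))) := by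
        rw [lintegral_const_mul' _ _ ENNReal.ofReal_ne_top, lintegral_add_left (by fun_prop),
          lintegral_exp_neg_mul_rpow_one_div hL hν₁, lintegral_exp_neg_mul_rpow_one_div hp hν₂]
    _ = _ := by
        rw [← ENNReal.ofReal_add (by positivity) (by positivity), ← ENNReal.ofReal_mul hc]

theorem rpow_one_div_two_mul_log_self {d : ℝ} (hd : 0 < d) (hlog : log d ≠ 0) :
    d ^ (1 / (2 * log d)) = sqrt (exp 1) := by
  rw [rpow_def_of_pos hd, sqrt_eq_rpow, exp_one_rpow]
  congr 1
  field_simp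

theorem moment_bound_from_tails_general {Ω : Type*} [MeasureSpace Ω]
    [IsProbabilityMeasure (volume : Measure Ω)]
    (Z : Ω → ℝ) (hmeas : Measurable Z) (hpos : ∀ ω, 0 ≤ Z ω)
    (ν₁ ν₂ d tstar : ℝ) (hν₁ : 0 < ν₁) (hν₂ : 0 < ν₂) (hd : 2 ≤ d)
    (h1 : ∀ t : ℝ, 0 < t → t ≤ tstar →
      (volume {ω | t < Z ω}).toReal ≤ d * Real.exp (-t ^ 2 * ν₁))
    (h2 : ∀ t : ℝ, tstar ≤ t →
      (volume {ω | t < Z ω}).toReal ≤ d * Real.exp (-t * ν₂)) :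
    (∫ ω, Z ω ^ (2 * Real.log d)) ^ (1 / (2 * Real.log d)) ≤
      Real.sqrt (Real.exp 1) *
        (Real.log d * ν₁ ^ (-Real.log d) * Real.Gamma (Real.log d) +
          2 * Real.log d * ν₂ ^ (-(2 * Real.log d)) * Real.Gamma (2 * Real.log d))
          ^ (1 / (2 * Real.log d)) := by
  have hL : 0 < log d := log_pos (by linarith)
  have htail : ∀ s, 0 < s → volume {ω | s < Z ω} ≤
      ENNReal.ofReal (d * (exp (-ν₁ * s ^ 2) + exp (-ν₂ * s))) := by
    intro s hs
    rw [← ENNReal.ofReal_toReal (measure_ne_top _ _)]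
    refine ENNReal.ofReal_le_ofReal ?_
    have hd₀ : 0 ≤ d := by linarith
    rcases le_total s tstar with h | h
    · have := h1 s hs h
      rw [show -s ^ 2 * ν₁ = -ν₁ * s ^ 2 by ring] at this
      nlinarith [mul_nonneg hd₀ (exp_pos (-ν₂ * s)).le]
    · have := h2 s h
      rw [show -s * ν₂ = -ν₂ * s by ring] at this
      nlinarith [mul_nonneg hd₀ (exp_pos (-ν₁ * s ^ 2)).le]
  have hZp : ∀ ω, 0 ≤ Z ω ^ (2 * log d) := fun ω => rpow_nonneg (hpos ω) _
  have hmoment : ∫ ω, Z ω ^ (2 * log d) ≤ d * (log d * ν₁ ^ (-log d) * Gamma (log d) +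
      2 * log d * ν₂ ^ (-(2 * log d)) * Gamma (2 * log d)) := by
    rw [integral_eq_lintegral_of_nonneg_ae (ae_of_all _ hZp)
      (hmeas.pow_const _).aestronglyMeasurable]
    exact ENNReal.toReal_le_of_le_ofReal (by positivity) <|
      lintegral_rpow_two_mul_le_of_tail_le hmeas.aemeasurable hpos (by linarith) hν₁ hν₂ hL htail
  calc _ ≤ (d * (log d * ν₁ ^ (-log d) * Gamma (log d) +
        2 * log d * ν₂ ^ (-(2 * log d)) * Gamma (2 * log d))) ^ (1 / (2 * log d)) :=
        rpow_le_rpow (integral_nonneg hZp) hmoment (by positivity)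
    _ = _ := by
      rw [mul_rpow (by linarith) (by positivity), rpow_one_div_two_mul_log_self (by linarith) hL.ne']

/-- Moment bound from mixed sub-Gaussian/sub-exponential tails: if
P(Z > t) ≤ d·exp(−t²ν₁) for 0 < t ≤ t* and P(Z > t) ≤ d·exp(−tν₂) for t ≥ t*,
then E[Z^{2 log d}]^{1/(2 log d)} ≤ √e · (log d · ν₁^{−log d} Γ(log d)
+ 2 log d · ν₂^{−2 log d} Γ(2 log d))^{1/(2 log d)}. -/
theorem moment_bound_from_tails {Ω : Type*} [MeasureSpace Ω]
    [IsProbabilityMeasure (volume : Measure Ω)]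
    (Z : Ω → ℝ) (hmeas : Measurable Z) (hpos : ∀ ω, 0 ≤ Z ω)
    (ν₁ ν₂ d tstar : ℝ) (hν₁ : 0 < ν₁) (hν₂ : 0 < ν₂) (hd : 2 ≤ d)
    (htstar : 0 < tstar)
    (h1 : ∀ t : ℝ, 0 < t → t ≤ tstar →
      (volume {ω | t < Z ω}).toReal ≤ d * Real.exp (-t ^ 2 * ν₁))
    (h2 : ∀ t : ℝ, tstar ≤ t →
      (volume {ω | t < Z ω}).toReal ≤ d * Real.exp (-t * ν₂)) :
    (∫ ω, Z ω ^ (2 * Real.log d)) ^ (1 / (2 * Real.log d)) ≤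
      Real.sqrt (Real.exp 1) *
        (Real.log d * ν₁ ^ (-Real.log d) * Real.Gamma (Real.log d) +
          2 * Real.log d * ν₂ ^ (-(2 * Real.log d)) * Real.Gamma (2 * Real.log d))
          ^ (1 / (2 * Real.log d)) :=
  moment_bound_from_tails_general Z hmeas hpos ν₁ ν₂ d tstar hν₁ hν₂ hd h1 h2
end
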